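/- For every integer m ≥ 2, let G be the cocktail party graph on vertex set (Fin m) × (Fin 2), in which (j,a) and (k,b) are adjacent if and only if j ≠ k (so G is a connected (2m−2)-regular graph, the complete multipartite graph with m parts of size 2). Then the signless Laplacian M of the Q-graph Q(G) admits no perfect state transfer: there exist no distinct indices z, w ∈ V ⊕ E, no t ∈ ℝ, and no λ ∈ ℂ with |λ| = 1 such that exp(−i·t·M)·e_z = λ·e_w. -/

import Mathlib

open Matrix

/-- The vertex-edge incidence matrix of a simple graph. -/
noncomputable def incMat {V : Type*} [Fintype V] [DecidableEq V] (G : SimpleGraph V) :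
    Matrix V G.edgeSet ℝ :=
  Matrix.of fun v e => if v ∈ (e : Sym2 V) then 1 else 0

/-- The signless Laplacian of the Q-graph of an r-regular graph, as a block matrix. -/
noncomputable def QQ {V : Type*} [Fintype V] [DecidableEq V] (G : SimpleGraph V) (r : ℕ) :
    Matrix (V ⊕ G.edgeSet) (V ⊕ G.edgeSet) ℝ :=
  Matrix.fromBlocks ((r : ℝ) • 1) (incMat G) (incMat G)ᵀ
    ((2 * (r : ℝ) - 2) • 1 + (incMat G)ᵀ * incMat G)

/-- The cocktail party graph: `(j, a)` and `(k, b)` are adjacent iff `j ≠ k`. -/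
def cocktail (m : ℕ) : SimpleGraph (Fin m × Fin 2) where
  Adj p q := p.1 ≠ q.1
  symm := ⟨fun _ _ h => h.symm⟩
  loopless := ⟨fun _ h => h rfl⟩

instance (m : ℕ) : DecidableRel (cocktail m).Adj :=
  fun p q => inferInstanceAs (Decidable (p.1 ≠ q.1))

/-!
Perfect state transfer `U(t) e_z = λ e_w` for the symmetric matrix `U(t) = exp(-itM)` gives, for
every real eigenvector `M v = μ v`, `e^{-itμ} v_z = vᵀ U(t) e_z = λ v_w`; hence `|v_z| = |v_w|`
and, if `v_z ≠ 0`, `e^{-2itμ} = λ²`. So any two eigenvalues with eigenvectors nonzero at `z`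
differ by a multiple of `π / t`.

If `R Rᵀ x = q x` with `q > 0`, then `(x, c Rᵀ x)` with `c = (μ - r) / q` is an eigenvector of `M`
for both roots `μ` of a quadratic, and these roots differ by `√((r + q)² - 4r + 4)`. For the
cocktail party graph (`r = 2m - 2`) we use the all-ones vector (`q = 2r`) and `e_(j,0) - e_(j,1)`
(`q = r`), with `j` chosen so that both lifts are nonzero at `z`. As `t ≠ 0`, the ratio
`√(9r² - 4r + 4) / √(4r² - 4r + 4)` would be rational, i.e. `(9r² - 4r + 4)(4r² - 4r + 4)` a
square; but nine times this product lies strictly between `(18r² - 13r + 12)²` and the next square.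
-/

open Complex

namespace Matrix

open scoped Norms.Operator in
theorem exp_mulVec_of_mulVec_eq_smul {𝕂 n : Type*} [RCLike 𝕂] [Fintype n] [DecidableEq n]
    {N : Matrix n n 𝕂} {v : n → 𝕂} {μ : 𝕂} (h : N *ᵥ v = μ • v) :
    NormedSpace.exp N *ᵥ v = NormedSpace.exp μ • v := by
  have hpow (k : ℕ) : N ^ k *ᵥ v = μ ^ k • v := by
    induction k with
    | zero => simp
    | succ k ih => rw [pow_succ, ← mulVec_mulVec, h, mulVec_smul, ih, smul_smul, ← pow_succ']
  let applyTo : Matrix n n 𝕂 →+ (n → 𝕂) := AddMonoidHom.mk' (· *ᵥ v) (add_mulVec · · v)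
  have hN := (NormedSpace.exp_series_hasSum_exp' (𝕂 := 𝕂) N).map applyTo
    (continuous_id.matrix_mulVec continuous_const)
  have hμ := (NormedSpace.exp_series_hasSum_exp' (𝕂 := 𝕂) μ).smul_const v
  refine hN.unique ?_
  convert hμ using 2 with k
  simp [applyTo, smul_mulVec, hpow, smul_smul]

end Matrix

section PerfectStateTransfer

variable {ι : Type*} [Fintype ι] [DecidableEq ι]

noncomputable def transitionMatrix (M : Matrix ι ι ℝ) (t : ℝ) : Matrix ι ι ℂ :=
  NormedSpace.exp ((-(I * t)) • M.map ofReal)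

def IsPerfectStateTransfer (M : Matrix ι ι ℝ) (t : ℝ) (z w : ι) (l : ℂ) : Prop :=
  transitionMatrix M t *ᵥ Pi.single z 1 = l • Pi.single w 1

variable {M : Matrix ι ι ℝ} {t : ℝ} {z w : ι} {l : ℂ}

theorem transitionMatrix_mulVec_of_mulVec_eq_smul {v : ι → ℝ} {μ : ℝ} (hv : M *ᵥ v = μ • v) :
    transitionMatrix M t *ᵥ (ofReal ∘ v) = cexp (-(I * t) * μ) • (ofReal ∘ v) := by
  rw [transitionMatrix, exp_eq_exp_ℂ]
  refine exp_mulVec_of_mulVec_eq_smul ?_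
  ext i
  have hmap : (M.map ofReal *ᵥ ofReal ∘ v) i = μ * v i :=
    (RingHom.map_mulVec ofRealHom M v i).symm.trans (by simp [hv])
  simp only [neg_smul, neg_mulVec, smul_mulVec, Pi.neg_apply, Pi.smul_apply, hmap, smul_eq_mul,
    Function.comp_apply]
  ring

theorem isSymm_transitionMatrix (hM : M.IsSymm) (t : ℝ) : (transitionMatrix M t).IsSymm :=
  ((hM.map ofReal).smul _).exp

theorem IsPerfectStateTransfer.cexp_mul_apply_eq (hPST : IsPerfectStateTransfer M t z w l)
    (hM : M.IsSymm) {v : ι → ℝ} {μ : ℝ} (hv : M *ᵥ v = μ • v) :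
    cexp (-(I * t) * μ) * v z = l * v w := by
  have hU := transitionMatrix_mulVec_of_mulVec_eq_smul (t := t) hv
  calc cexp (-(I * t) * μ) * v z
      = (ofReal ∘ v) ⬝ᵥ (transitionMatrix M t *ᵥ Pi.single z 1) := by
        rw [dotProduct_mulVec, ← (isSymm_transitionMatrix hM t).eq, vecMul_transpose, hU]
        simp
    _ = l * v w := by
        rw [hPST]
        simp

theorem IsPerfectStateTransfer.cexp_sq_eq (hPST : IsPerfectStateTransfer M t z w l)
    (hM : M.IsSymm) (hl : ‖l‖ = 1)
    {v : ι → ℝ} {μ : ℝ} (hv : M *ᵥ v = μ • v) (hz : v z ≠ 0) :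
    cexp (-(I * t) * μ) ^ 2 = l ^ 2 := by
  have key := hPST.cexp_mul_apply_eq hM hv
  have hwz : v w ^ 2 = v z ^ 2 := by
    have := congrArg norm key
    have hphase : ‖cexp (-(I * t) * μ)‖ = 1 := by simp [norm_exp]
    rw [norm_mul, norm_mul, hl, hphase, one_mul, one_mul, norm_real, norm_real] at this
    rw [sq_eq_sq_iff_abs_eq_abs, ← Real.norm_eq_abs, ← Real.norm_eq_abs, this]
  have hz' : (v z : ℂ) ^ 2 ≠ 0 := by exact_mod_cast pow_ne_zero 2 hz
  refine mul_right_cancel₀ hz' ?_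
  rw [← mul_pow, key, mul_pow, ← ofReal_pow, hwz, ofReal_pow]

theorem IsPerfectStateTransfer.exists_int_mul_sub_eq (hPST : IsPerfectStateTransfer M t z w l)
    (hM : M.IsSymm) (hl : ‖l‖ = 1)
    {v₁ v₂ : ι → ℝ} {μ₁ μ₂ : ℝ} (hv₁ : M *ᵥ v₁ = μ₁ • v₁) (hz₁ : v₁ z ≠ 0)
    (hv₂ : M *ᵥ v₂ = μ₂ • v₂) (hz₂ : v₂ z ≠ 0) :
    ∃ n : ℤ, t * (μ₁ - μ₂) = n * Real.pi := by
  have h : cexp (2 * (-(I * t) * μ₁)) = cexp (2 * (-(I * t) * μ₂)) := by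
    simp only [two_mul, exp_add, ← sq, hPST.cexp_sq_eq hM hl hv₁ hz₁,
      hPST.cexp_sq_eq hM hl hv₂ hz₂]
  obtain ⟨n, hn⟩ := exp_eq_exp_iff_exists_int.1 h
  refine ⟨-n, ?_⟩
  have := congrArg im hn
  simp at this
  push_cast
  linarith

theorem IsPerfectStateTransfer.time_ne_zero (hPST : IsPerfectStateTransfer M t z w l)
    (hzw : z ≠ w) : t ≠ 0 := by
  rintro rfl
  have := congrFun hPST z
  simp [transitionMatrix, hzw] at this

end PerfectStateTransfer

section QGraph

variable {V : Type*} [Fintype V] [DecidableEq V] (G : SimpleGraph V)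

theorem incMat_transpose_mulVec_apply (x : V → ℝ) {p q : V} (he : s(p, q) ∈ G.edgeSet) :
    ((incMat G)ᵀ *ᵥ x) ⟨s(p, q), he⟩ = x p + x q := by
  have hpq : p ≠ q := G.ne_of_adj he
  simp [mulVec, dotProduct, incMat, Finset.sum_ite, Finset.filter_or, Finset.filter_eq', hpq]

theorem incMat_transpose_mulVec_one : (incMat G)ᵀ *ᵥ 1 = 2 := by
  ext ⟨e, he⟩
  induction e using Sym2.ind with
  | _ p q => rw [incMat_transpose_mulVec_apply G 1 he]; norm_num

theorem isSymm_QQ (r : ℕ) : (QQ G r).IsSymm := by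
  simp [IsSymm, QQ, fromBlocks_transpose, transpose_mul]

variable [DecidableRel G.Adj]

theorem incMat_mul_transpose :
    incMat G * (incMat G)ᵀ = G.degMatrix ℝ + G.adjMatrix ℝ := by
  ext u v
  have hsum : ∑ e, G.incMatrix ℝ u e * G.incMatrix ℝ v e =
      ∑ e : G.edgeSet, incMat G u e * incMat G v e := by
    refine Finset.sum_congr_set _ _ _ (fun e he => ?_) (fun e he => ?_)
    · simp [incMat, SimpleGraph.incMatrix_apply', SimpleGraph.incidenceSet, he]
    · rw [G.incMatrix_of_notMem_incidenceSet (fun h => he h.1), zero_mul]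
  have := congrFun (congrFun (G.incMatrix_mul_transpose (R := ℝ)) u) v
  rw [mul_apply] at this ⊢
  simp only [transpose_apply, hsum] at this ⊢
  rw [this]
  by_cases huv : u = v
  · subst huv; simp [SimpleGraph.degMatrix]
  · simp [SimpleGraph.degMatrix, huv]

theorem incMat_mulVec_transpose_mulVec_of_isRegularOfDegree {r : ℕ}
    (hG : G.IsRegularOfDegree r) {x : V → ℝ} {θ : ℝ} (hx : G.adjMatrix ℝ *ᵥ x = θ • x) :
    incMat G *ᵥ ((incMat G)ᵀ *ᵥ x) = (r + θ) • x := by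
  ext u
  simp [mulVec_mulVec, incMat_mul_transpose, add_mulVec, hx, SimpleGraph.degMatrix,
    mulVec_diagonal, hG u, add_mul]

theorem QQ_mulVec_sumElim (r : ℕ) {x : V → ℝ} {q μ : ℝ}
    (hx : incMat G *ᵥ ((incMat G)ᵀ *ᵥ x) = q • x) (hq : q ≠ 0)
    (hμ : μ ^ 2 - (3 * r - 2 + q) * μ + (2 * r ^ 2 - 2 * r + (r - 1) * q) = 0) :
    QQ G r *ᵥ Sum.elim x (((μ - r) / q) • ((incMat G)ᵀ *ᵥ x)) =
      μ • Sum.elim x (((μ - r) / q) • ((incMat G)ᵀ *ᵥ x)) := by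
  rw [QQ, fromBlocks_mulVec]
  ext (u | e)
  · simp only [Sum.elim_comp_inl, Sum.elim_comp_inr, Sum.elim_inl, Pi.add_apply, Pi.smul_apply,
      smul_mulVec, one_mulVec, mulVec_smul, hx, smul_eq_mul]
    field_simp
    ring
  · have := congrArg (fun y => ((incMat G)ᵀ *ᵥ y) e) hx
    simp only [mulVec_smul, Pi.smul_apply, smul_eq_mul] at this
    simp only [Sum.elim_comp_inl, Sum.elim_comp_inr, Sum.elim_inr, Pi.add_apply, Pi.smul_apply,
      add_mulVec, smul_mulVec, one_mulVec, mulVec_smul, ← mulVec_mulVec, smul_eq_mul, this]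
    field_simp
    linear_combination -((incMat G)ᵀ *ᵥ x) e * hμ

end QGraph

theorem IsPerfectStateTransfer.exists_int_mul_sqrt_eq_of_QQ {V : Type*} [Fintype V]
    [DecidableEq V] {G : SimpleGraph V} [DecidableRel G.Adj] {r : ℕ} {t : ℝ}
    {z w : V ⊕ G.edgeSet} {l : ℂ} (hPST : IsPerfectStateTransfer (QQ G r) t z w l) (hl : ‖l‖ = 1)
    {x : V → ℝ} {q : ℝ} (hx : incMat G *ᵥ ((incMat G)ᵀ *ᵥ x) = q • x) (hq : 0 < q)
    (hz : Sum.elim x ((incMat G)ᵀ *ᵥ x) z ≠ 0) :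
    ∃ n : ℤ, t * √((r + q) ^ 2 - 4 * r + 4) = n * Real.pi := by
  set d := √((r + q) ^ 2 - 4 * r + 4)
  have hd : d ^ 2 = (r + q) ^ 2 - 4 * r + 4 :=
    Real.sq_sqrt (by nlinarith [sq_nonneg ((r : ℝ) - 2)])
  have hroot (μ : ℝ) (hμ : μ ^ 2 - (3 * r - 2 + q) * μ + (2 * r ^ 2 - 2 * r + (r - 1) * q) = 0) :
      QQ G r *ᵥ Sum.elim x (((μ - r) / q) • ((incMat G)ᵀ *ᵥ x)) =
        μ • Sum.elim x (((μ - r) / q) • ((incMat G)ᵀ *ᵥ x)) ∧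
      Sum.elim x (((μ - r) / q) • ((incMat G)ᵀ *ᵥ x)) z ≠ 0 := by
    refine ⟨QQ_mulVec_sumElim G r hx hq.ne' hμ, ?_⟩
    have hμr : μ - r ≠ 0 := by
      intro h
      rw [show μ = r by linarith] at hμ
      linarith
    cases z with
    | inl u => simpa using hz
    | inr e => simpa [hμr, hq.ne'] using hz
  obtain ⟨hv₁, hz₁⟩ := hroot ((3 * r - 2 + q + d) / 2) (by linear_combination hd / 4)
  obtain ⟨hv₂, hz₂⟩ := hroot ((3 * r - 2 + q - d) / 2) (by linear_combination hd / 4)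
  obtain ⟨n, hn⟩ := hPST.exists_int_mul_sub_eq (isSymm_QQ G r) hl hv₁ hz₁ hv₂ hz₂
  exact ⟨n, by rw [← hn]; ring⟩

section Cocktail

variable {m : ℕ}

@[simp]
theorem cocktail_adj {p q : Fin m × Fin 2} : (cocktail m).Adj p q ↔ p.1 ≠ q.1 := Iff.rfl

theorem cocktail_isRegularOfDegree : (cocktail m).IsRegularOfDegree (2 * m - 2) := by
  intro u
  have hnbr : (cocktail m).neighborFinset u = ({u.1} ×ˢ Finset.univ)ᶜ := by
    ext v
    simp [Prod.ext_iff]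
  simp [← SimpleGraph.card_neighborFinset_eq_degree, hnbr, Finset.card_compl, mul_comm]

def pairDiff (j : Fin m) : Fin m × Fin 2 → ℝ := Pi.single (j, 0) 1 - Pi.single (j, 1) 1

theorem adjMatrix_mulVec_pairDiff (j : Fin m) : (cocktail m).adjMatrix ℝ *ᵥ pairDiff j = 0 := by
  ext u
  simp [pairDiff]

theorem pairDiff_apply_ne_zero {j : Fin m} {p : Fin m × Fin 2} (hp : p.1 = j) :
    pairDiff j p ≠ 0 := by
  obtain ⟨k, a⟩ := p
  subst hp
  fin_cases a <;> simp [pairDiff]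

theorem pairDiff_apply_of_fst_ne {j : Fin m} {p : Fin m × Fin 2} (hp : p.1 ≠ j) :
    pairDiff j p = 0 := by
  simp [pairDiff, Prod.ext_iff, hp]

theorem exists_pairDiff_sumElim_ne_zero (z : (Fin m × Fin 2) ⊕ (cocktail m).edgeSet) :
    ∃ j, Sum.elim (pairDiff j) ((incMat (cocktail m))ᵀ *ᵥ pairDiff j) z ≠ 0 := by
  cases z with
  | inl u => exact ⟨u.1, pairDiff_apply_ne_zero rfl⟩
  | inr e =>
    obtain ⟨e, he⟩ := e
    induction e using Sym2.ind with
    | _ p q =>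
      refine ⟨p.1, ?_⟩
      rw [Sum.elim_inr, incMat_transpose_mulVec_apply _ _ he,
        pairDiff_apply_of_fst_ne (Ne.symm he), add_zero]
      exact pairDiff_apply_ne_zero rfl

end Cocktail

theorem isSquare_mul_of_mul_sqrt_eq {a b : ℤ} (ha : 0 ≤ a) (hb : 0 < b) {t : ℝ} (ht : t ≠ 0)
    {n₁ n₂ : ℤ} (h₁ : t * √a = n₁ * Real.pi) (h₂ : t * √b = n₂ * Real.pi) : IsSquare (a * b) := by
  have hsb : 0 < √(b : ℝ) := Real.sqrt_pos.2 (by exact_mod_cast hb)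
  have hn₂ : (n₂ : ℝ) ≠ 0 := by
    rintro h
    rw [h, zero_mul] at h₂
    exact mul_ne_zero ht hsb.ne' h₂
  have hratio : n₂ * √(a : ℝ) = n₁ * √(b : ℝ) := by
    refine mul_left_cancel₀ ht ?_
    linear_combination n₂ * h₁ - n₁ * h₂
  have hsqrt : √((a * b : ℤ) : ℝ) = ((n₁ * b / n₂ : ℚ) : ℝ) := by
    push_cast
    rw [Real.sqrt_mul (by exact_mod_cast ha), eq_div_iff hn₂]
    linear_combination √(b : ℝ) * hratio + n₁ * Real.sq_sqrt (Int.cast_nonneg hb.le)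
  by_contra hsq
  exact (irrational_sqrt_intCast_iff_of_nonneg (mul_nonneg ha hb.le)).2 hsq ⟨_, hsqrt.symm⟩

-- the discriminants `(r + q)² - 4r + 4` for `q = 2R` and `q = R`
theorem not_isSquare_discr_mul_discr {R : ℤ} (hR : 2 ≤ R) :
    ¬ IsSquare ((9 * R ^ 2 - 4 * R + 4) * (4 * R ^ 2 - 4 * R + 4)) := by
  rintro ⟨s, hs⟩
  set K := 18 * R ^ 2 - 13 * R + 12
  have hK : 0 ≤ K := by nlinarith
  have h3s : (3 * s) ^ 2 = K ^ 2 + (11 * R ^ 2 + 24 * R) := by linear_combination 9 * hs.symm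
  have hlo : |K| < |3 * s| := sq_lt_sq.1 (by nlinarith)
  have hhi : |3 * s| < |K + 1| := sq_lt_sq.1 (by nlinarith)
  rw [abs_of_nonneg hK] at hlo
  rw [abs_of_nonneg (by linarith : 0 ≤ K + 1)] at hhi
  omega

theorem stmt17 (m : ℕ) (hm : 2 ≤ m) :
    ¬ ∃ (z w : (Fin m × Fin 2) ⊕ (cocktail m).edgeSet), z ≠ w ∧
      ∃ (t : ℝ) (l : ℂ), ‖l‖ = 1 ∧
        NormedSpace.exp
            ((-(Complex.I * (t : ℂ))) • (QQ (cocktail m) (2 * m - 2)).map Complex.ofReal) *ᵥ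
            (Pi.single z 1 : (Fin m × Fin 2) ⊕ (cocktail m).edgeSet → ℂ)
          = l • (Pi.single w 1 : (Fin m × Fin 2) ⊕ (cocktail m).edgeSet → ℂ) := by
  rintro ⟨z, w, hzw, t, l, hl, hPST⟩
  replace hPST : IsPerfectStateTransfer (QQ (cocktail m) (2 * m - 2)) t z w l := hPST
  set r := 2 * m - 2 with hr
  have hr2 : 2 ≤ r := by omega
  have hreg : (cocktail m).IsRegularOfDegree r := cocktail_isRegularOfDegree
  have hones := incMat_mulVec_transpose_mulVec_of_isRegularOfDegree _ hreg
    (x := 1) (θ := r) (by ext; simp [hreg _])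
  obtain ⟨n₁, hn₁⟩ := hPST.exists_int_mul_sqrt_eq_of_QQ hl hones (by positivity)
    (by cases z <;> simp [incMat_transpose_mulVec_one])
  obtain ⟨j, hj⟩ := exists_pairDiff_sumElim_ne_zero z
  have hpair := incMat_mulVec_transpose_mulVec_of_isRegularOfDegree _ hreg
    (x := pairDiff j) (θ := 0) (by rw [adjMatrix_mulVec_pairDiff, zero_smul])
  obtain ⟨n₂, hn₂⟩ := hPST.exists_int_mul_sqrt_eq_of_QQ hl hpair (by positivity) hj
  refine not_isSquare_discr_mul_discr (R := r) (by exact_mod_cast hr2)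
    (isSquare_mul_of_mul_sqrt_eq (by nlinarith) (by nlinarith) (hPST.time_ne_zero hzw)
      (n₁ := n₁) (n₂ := n₂) ?_ ?_)
  · convert hn₁ using 4; push_cast; ring
  · convert hn₂ using 4; push_cast; ring
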